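/- arXiv:2301.12131 — 3 statements merged into one kernel-verified Lean document; each statement's English description precedes it below -/
import Mathlib

section
/- Let E be a real inner product space, P the orthogonal projection onto a subspace U, and v₁, v₂ orthonormal vectors with ‖P v₁‖ ≥ ‖P v₂‖. Let w₁, w₂ be reals with w₁² + w₂² = 1 and suppose the unit vector v = w₁ v₁ + w₂ v₂ satisfies ‖P v‖² < ‖P v₂‖². Then the unit vector v' = w₂ v₁ − w₁ v₂ satisfies ‖P v'‖² > ‖P v₁‖². -/
open scoped RealInnerProductSpace

theorem stmt7 {E : Type*} [NormedAddCommGroup E] [InnerProductSpace ℝ E]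
    (U : Submodule ℝ E) [Submodule.HasOrthogonalProjection U]
    (v₁ v₂ : E) (h₁ : ‖v₁‖ = 1) (h₂ : ‖v₂‖ = 1) (h₁₂ : ⟪v₁, v₂⟫ = 0)
    (hge : ‖(Submodule.orthogonalProjectionOnto U v₁ : E)‖ ≥ ‖(Submodule.orthogonalProjectionOnto U v₂ : E)‖)
    (w₁ w₂ : ℝ) (hw : w₁ ^ 2 + w₂ ^ 2 = 1)
    (hlt : ‖(Submodule.orthogonalProjectionOnto U (w₁ • v₁ + w₂ • v₂) : E)‖ ^ 2 <
      ‖(Submodule.orthogonalProjectionOnto U v₂ : E)‖ ^ 2) :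
    ‖(Submodule.orthogonalProjectionOnto U (w₂ • v₁ - w₁ • v₂) : E)‖ ^ 2 >
      ‖(Submodule.orthogonalProjectionOnto U v₁ : E)‖ ^ 2 := by
  set a₁ : E := (Submodule.orthogonalProjectionOnto U v₁ : E) with ha₁
  set a₂ : E := (Submodule.orthogonalProjectionOnto U v₂ : E) with ha₂
  have hPv : (Submodule.orthogonalProjectionOnto U (w₁ • v₁ + w₂ • v₂) : E) = w₁ • a₁ + w₂ • a₂ := by
    simp [ha₁, ha₂, map_add, map_smul]
  have hPv' : (Submodule.orthogonalProjectionOnto U (w₂ • v₁ - w₁ • v₂) : E) = w₂ • a₁ - w₁ • a₂ := by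
    simp [ha₁, ha₂, map_sub, map_smul]
  rw [hPv] at hlt
  rw [hPv']
  have e1 : ‖w₁ • a₁ + w₂ • a₂‖ ^ 2 =
      w₁ ^ 2 * ‖a₁‖ ^ 2 + 2 * (w₁ * w₂) * ⟪a₁, a₂⟫ + w₂ ^ 2 * ‖a₂‖ ^ 2 := by
    rw [← real_inner_self_eq_norm_sq, ← real_inner_self_eq_norm_sq,
        ← real_inner_self_eq_norm_sq]
    simp [inner_add_left, inner_add_right, inner_smul_left, inner_smul_right,
      real_inner_comm a₂ a₁, -inner_self_eq_norm_sq_to_K]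
    ring
  have e2 : ‖w₂ • a₁ - w₁ • a₂‖ ^ 2 =
      w₂ ^ 2 * ‖a₁‖ ^ 2 - 2 * (w₁ * w₂) * ⟪a₁, a₂⟫ + w₁ ^ 2 * ‖a₂‖ ^ 2 := by
    rw [← real_inner_self_eq_norm_sq, ← real_inner_self_eq_norm_sq,
        ← real_inner_self_eq_norm_sq]
    simp [inner_sub_left, inner_sub_right, inner_smul_left, inner_smul_right,
      real_inner_comm a₂ a₁, -inner_self_eq_norm_sq_to_K]
    ring
  rw [e2]
  rw [e1] at hlt
  nlinarith [hlt, hw]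
end

section
/- Let E be a real inner product space, P the orthogonal projection onto a subspace U, and v₁, v₂ orthonormal vectors. Suppose v₁ maximizes ‖P v‖ over all unit vectors v ∈ span{v₁, v₂}, i.e., ‖P v‖ ≤ ‖P v₁‖ for all unit v in the span. Then every unit vector v ∈ span{v₁, v₂} satisfies ‖P v‖ ≥ ‖P v₂‖. -/
open scoped RealInnerProductSpace

private lemma nsq {E : Type*} [NormedAddCommGroup E] [InnerProductSpace ℝ E]
    (x y : E) (a b : ℝ) :
    ‖a • x + b • y‖ ^ 2 = a ^ 2 * ‖x‖ ^ 2 + 2 * (a * b) * ⟪x, y⟫ + b ^ 2 * ‖y‖ ^ 2 := by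
  rw [norm_add_sq_real, norm_smul, norm_smul, real_inner_smul_left, real_inner_smul_right]
  simp [mul_pow, sq_abs]
  ring

theorem stmt8 {E : Type*} [NormedAddCommGroup E] [InnerProductSpace ℝ E]
    (U : Submodule ℝ E) [Submodule.HasOrthogonalProjection U]
    (v₁ v₂ : E) (h₁ : ‖v₁‖ = 1) (h₂ : ‖v₂‖ = 1) (h₁₂ : ⟪v₁, v₂⟫ = 0)
    (hmax : ∀ v ∈ Submodule.span ℝ ({v₁, v₂} : Set E), ‖v‖ = 1 →
      ‖(Submodule.orthogonalProjectionOnto U v : E)‖ ≤ ‖(Submodule.orthogonalProjectionOnto U v₁ : E)‖) :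
    ∀ v ∈ Submodule.span ℝ ({v₁, v₂} : Set E), ‖v‖ = 1 →
      ‖(Submodule.orthogonalProjectionOnto U v : E)‖ ≥ ‖(Submodule.orthogonalProjectionOnto U v₂ : E)‖ := by
  intro v hv hv1
  obtain ⟨a, b, rfl⟩ := Submodule.mem_span_pair.mp hv
  have hab : a ^ 2 + b ^ 2 = 1 := by
    have := nsq v₁ v₂ a b
    rw [hv1, h₁, h₂, h₁₂] at this
    nlinarith
  -- the swapped vector
  have hw_mem : b • v₁ + (-a) • v₂ ∈ Submodule.span ℝ ({v₁, v₂} : Set E) :=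
    Submodule.mem_span_pair.mpr ⟨b, -a, rfl⟩
  have hw_norm : ‖b • v₁ + (-a) • v₂‖ = 1 := by
    have := nsq v₁ v₂ b (-a)
    rw [h₁, h₂, h₁₂] at this
    have h0 : (0:ℝ) ≤ ‖b • v₁ + (-a) • v₂‖ := norm_nonneg _
    nlinarith
  have h2mem : v₂ ∈ Submodule.span ℝ ({v₁, v₂} : Set E) :=
    Submodule.mem_span_pair.mpr ⟨0, 1, by simp⟩
  set x : E := (Submodule.orthogonalProjectionOnto U v₁ : E) with hx
  set y : E := (Submodule.orthogonalProjectionOnto U v₂ : E) with hy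
  have hPlin : ∀ s t : ℝ, ((Submodule.orthogonalProjectionOnto U (s • v₁ + t • v₂) : E))
      = s • x + t • y := by
    intro s t
    simp [hx, hy, map_add, map_smul]
  have hm : ‖y‖ ≤ ‖x‖ := hmax v₂ h2mem h₂
  have hw := hmax _ hw_mem hw_norm
  rw [hPlin b (-a)] at hw
  have hwsq : b ^ 2 * ‖x‖ ^ 2 + 2 * (b * (-a)) * ⟪x, y⟫ + (-a) ^ 2 * ‖y‖ ^ 2 ≤ ‖x‖ ^ 2 := by
    have := nsq x y b (-a)
    nlinarith [norm_nonneg (b • x + (-a) • y), norm_nonneg x]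
  have hvsq : ‖(Submodule.orthogonalProjectionOnto U (a • v₁ + b • v₂) : E)‖ ^ 2
      = a ^ 2 * ‖x‖ ^ 2 + 2 * (a * b) * ⟪x, y⟫ + b ^ 2 * ‖y‖ ^ 2 := by
    rw [hPlin a b]; exact nsq x y a b
  have hN : (0:ℝ) ≤ ‖(Submodule.orthogonalProjectionOnto U (a • v₁ + b • v₂) : E)‖ := norm_nonneg _
  have hmn : (0:ℝ) ≤ ‖y‖ := norm_nonneg _
  nlinarith [sq_nonneg (‖x‖ - ‖y‖), sq_nonneg a, sq_nonneg b,
    sq_nonneg (‖(Submodule.orthogonalProjectionOnto U (a • v₁ + b • v₂) : E)‖ - ‖y‖)]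
end

section
/- Let E be a finite-dimensional real inner product space, P the orthogonal projection onto a subspace U, and let v₁, ..., v_n ∈ E be orthonormal vectors such that for each i, v_i maximizes ‖P v‖ over all unit vectors v in span{v₁,...,v_n} that are orthogonal to v₁, ..., v_{i−1}. Then every unit vector v ∈ span{v₁, ..., v_n} satisfies ‖P v‖ ≥ ‖P v_n‖. -/
open scoped RealInnerProductSpace

private lemma stmt16_span_zero {E : Type*} [NormedAddCommGroup E] [InnerProductSpace ℝ E]
    {n : ℕ} (v : Fin (n + 1) → E) (hv : Orthonormal ℝ v)
    {w : E} (hw : w ∈ Submodule.span ℝ (Set.range v))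
    (h : ∀ j, ⟪v j, w⟫ = 0) : w = 0 := by
  obtain ⟨c, rfl⟩ := (Submodule.mem_span_range_iff_exists_fun ℝ).1 hw
  have hc : ∀ j, c j = 0 := by
    intro j
    have hj := h j
    rwa [hv.inner_right_fintype] at hj
  simp [hc]


set_option maxHeartbeats 800000 in
private lemma stmt16_cross {E : Type*} [NormedAddCommGroup E] [InnerProductSpace ℝ E]
    [FiniteDimensional ℝ E] (U : Submodule ℝ E) {n : ℕ}
    (v : Fin (n + 1) → E) (hv : Orthonormal ℝ v)
    (hgreedy : ∀ i : Fin (n + 1), ∀ w ∈ Submodule.span ℝ (Set.range v), ‖w‖ = 1 →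
      (∀ j : Fin (n + 1), j < i → ⟪v j, w⟫ = 0) →
      ‖(Submodule.orthogonalProjection U w : E)‖ ≤ ‖(Submodule.orthogonalProjection U (v i) : E)‖)
    (i : Fin (n + 1)) (u : E) (hu : u ∈ Submodule.span ℝ (Set.range v))
    (huo : ∀ j : Fin (n + 1), j < i → ⟪v j, u⟫ = 0) (hui : ⟪v i, u⟫ = 0) :
    ⟪((Submodule.orthogonalProjection U (v i)) : E), ((Submodule.orthogonalProjection U u) : E)⟫ = 0 := by
  set P := Submodule.orthogonalProjection U with hP
  -- quadratic bound on the admissible subspace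
  have hbound : ∀ x ∈ Submodule.span ℝ (Set.range v),
      (∀ j : Fin (n + 1), j < i → ⟪v j, x⟫ = 0) →
      ‖(P x : E)‖ ^ 2 ≤ ‖(P (v i) : E)‖ ^ 2 * ‖x‖ ^ 2 := by
    intro x hx hxo
    rcases eq_or_ne x 0 with rfl | hx0
    · simp
    · have hnx : 0 < ‖x‖ := norm_pos_iff.2 hx0
      have h1 : ‖(‖x‖⁻¹ • x)‖ = 1 := by
        rw [norm_smul, norm_inv, norm_norm, inv_mul_cancel₀ hnx.ne']
      have h2 := hgreedy i (‖x‖⁻¹ • x)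
        (Submodule.smul_mem _ _ hx) h1
        (by intro j hj; rw [real_inner_smul_right, hxo j hj, mul_zero])
      have h3 : ‖(P (‖x‖⁻¹ • x) : E)‖ = ‖x‖⁻¹ * ‖(P x : E)‖ := by
        rw [map_smul, Submodule.coe_smul, norm_smul, norm_inv, norm_norm]
      rw [h3] at h2
      have h4 : ‖(P x : E)‖ ≤ ‖x‖ * ‖(P (v i) : E)‖ := by
        calc ‖(P x : E)‖ = ‖x‖ * (‖x‖⁻¹ * ‖(P x : E)‖) := by field_simp
          _ ≤ ‖x‖ * ‖(P (v i) : E)‖ := mul_le_mul_of_nonneg_left h2 (norm_nonneg _)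
      nlinarith [norm_nonneg (P x : E), norm_nonneg x]
  have hvi1 : ‖v i‖ = 1 := hv.1 i
  have hquad : ∀ t : ℝ,
      0 ≤ (‖(P (v i) : E)‖ ^ 2 * ‖u‖ ^ 2 - ‖(P u : E)‖ ^ 2) * (t * t)
        + (-2 * ⟪(P (v i) : E), (P u : E)⟫) * t + 0 := by
    intro t
    have hx : v i + t • u ∈ Submodule.span ℝ (Set.range v) :=
      Submodule.add_mem _ (Submodule.subset_span (Set.mem_range_self i))
        (Submodule.smul_mem _ _ hu)
    have hxo : ∀ j : Fin (n + 1), j < i → ⟪v j, v i + t • u⟫ = 0 := by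
      intro j hj
      rw [inner_add_right, real_inner_smul_right, huo j hj, hv.2 hj.ne, mul_zero, add_zero]
    have hb := hbound _ hx hxo
    have hn : ‖v i + t • u‖ ^ 2 = 1 + t ^ 2 * ‖u‖ ^ 2 := by
      rw [norm_add_sq_real, hvi1, real_inner_smul_right, hui, norm_smul, Real.norm_eq_abs,
        mul_pow, sq_abs]
      ring
    have hp : ‖(P (v i + t • u) : E)‖ ^ 2
        = ‖(P (v i) : E)‖ ^ 2 + 2 * t * ⟪(P (v i) : E), (P u : E)⟫ + t ^ 2 * ‖(P u : E)‖ ^ 2 := by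
      have he : (P (v i + t • u) : E) = (P (v i) : E) + t • (P u : E) := by
        rw [map_add, map_smul]; rfl
      rw [he, norm_add_sq_real, real_inner_smul_right, norm_smul, Real.norm_eq_abs,
        mul_pow, sq_abs]
      ring
    rw [hn, hp] at hb
    nlinarith [hb]
  have hd := discrim_le_zero hquad
  rw [discrim] at hd
  nlinarith [hd]

set_option maxHeartbeats 1600000 in
theorem stmt16 {E : Type*} [NormedAddCommGroup E] [InnerProductSpace ℝ E]
    [FiniteDimensional ℝ E] (U : Submodule ℝ E) {n : ℕ}
    (v : Fin (n + 1) → E) (hv : Orthonormal ℝ v)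
    (hgreedy : ∀ i : Fin (n + 1), ∀ w ∈ Submodule.span ℝ (Set.range v), ‖w‖ = 1 →
      (∀ j : Fin (n + 1), j < i → ⟪v j, w⟫ = 0) →
      ‖(Submodule.orthogonalProjection U w : E)‖ ≤ ‖(Submodule.orthogonalProjection U (v i) : E)‖) :
    ∀ w ∈ Submodule.span ℝ (Set.range v), ‖w‖ = 1 →
      ‖(Submodule.orthogonalProjection U w : E)‖ ≥
        ‖(Submodule.orthogonalProjection U (v (Fin.last n)) : E)‖ := by
  set P := Submodule.orthogonalProjection U with hP
  have hL0 : (0:ℝ) ≤ ‖(P (v (Fin.last n)) : E)‖ := norm_nonneg _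
  have hstage : ∀ i : Fin (n + 1),
      ‖(P (v (Fin.last n)) : E)‖ ≤ ‖(P (v i) : E)‖ := by
    intro i
    refine hgreedy i (v (Fin.last n))
      (Submodule.subset_span (Set.mem_range_self _)) (hv.1 _) ?_
    intro j hj
    exact hv.2 (ne_of_lt (lt_of_lt_of_le hj i.le_last))
  have key : ∀ d k : ℕ, n + 1 ≤ k + d →
      ∀ w ∈ Submodule.span ℝ (Set.range v), ‖w‖ = 1 →
      (∀ j : Fin (n + 1), (j : ℕ) < k → ⟪v j, w⟫ = 0) →
      ‖(P (v (Fin.last n)) : E)‖ ≤ ‖(P w : E)‖ := by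
    intro d
    induction d with
    | zero =>
      intro k hk w hw hw1 ho
      exfalso
      have hw0 : w = 0 := stmt16_span_zero v hv hw (fun j => ho j (by omega))
      rw [hw0, norm_zero] at hw1
      exact one_ne_zero hw1.symm
    | succ d ih =>
      intro k hk w hw hw1 ho
      by_cases hkn : n + 1 ≤ k
      · exfalso
        have hw0 : w = 0 := stmt16_span_zero v hv hw (fun j => ho j (by omega))
        rw [hw0, norm_zero] at hw1
        exact one_ne_zero hw1.symm
      · set i : Fin (n + 1) := ⟨k, by omega⟩ with hi
        set c := ⟪v i, w⟫ with hc
        set w' := w - c • v i with hw'def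
        have hvi : v i ∈ Submodule.span ℝ (Set.range v) :=
          Submodule.subset_span (Set.mem_range_self i)
        have hw' : w' ∈ Submodule.span ℝ (Set.range v) :=
          Submodule.sub_mem _ hw (Submodule.smul_mem _ _ hvi)
        have hw'o : ∀ j : Fin (n + 1), (j : ℕ) < k + 1 → ⟪v j, w'⟫ = 0 := by
          intro j hj
          rw [hw'def, inner_sub_right, real_inner_smul_right]
          rcases Nat.lt_or_ge (j : ℕ) k with h | h
          · rw [ho j h, hv.2 (by intro hji; rw [hji] at h; simp [hi] at h), mul_zero,
              sub_zero]
          · have hji : j = i := by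
              apply Fin.ext; simp [hi]; omega
            rw [hji, ← hc, real_inner_self_eq_norm_sq, hv.1 i]
            ring
        by_cases h0 : w' = 0
        · have hwc : w = c • v i := by rwa [hw'def, sub_eq_zero] at h0
          have habs : |c| = 1 := by
            rw [hwc, norm_smul, hv.1 i, mul_one, Real.norm_eq_abs] at hw1
            exact hw1
          have : ‖(P w : E)‖ = ‖(P (v i) : E)‖ := by
            rw [hwc, map_smul, Submodule.coe_smul, norm_smul, Real.norm_eq_abs, habs, one_mul]
          rw [this]
          exact hstage i
        · have hs : 0 < ‖w'‖ := norm_pos_iff.2 h0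
          set s := ‖w'‖ with hsdef
          set u := s⁻¹ • w' with hu
          have hu1 : ‖u‖ = 1 := by
            rw [hu, norm_smul, norm_inv, Real.norm_eq_abs, abs_of_pos hs, ← hsdef,
              inv_mul_cancel₀ hs.ne']
          have humem : u ∈ Submodule.span ℝ (Set.range v) := Submodule.smul_mem _ _ hw'
          have huo : ∀ j : Fin (n + 1), (j : ℕ) < k + 1 → ⟪v j, u⟫ = 0 := by
            intro j hj
            rw [hu, real_inner_smul_right, hw'o j hj, mul_zero]
          have ihu : ‖(P (v (Fin.last n)) : E)‖ ≤ ‖(P u : E)‖ :=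
            ih (k + 1) (by omega) u humem hu1 huo
          have hcross : ⟪(P (v i) : E), (P u : E)⟫ = 0 :=
            stmt16_cross U v hv hgreedy i u humem
              (fun j hj => huo j (by have := Fin.lt_iff_val_lt_val.1 hj; simp [hi] at this; omega))
              (huo i (by simp [hi]))
          have hweq : w = c • v i + s • u := by
            rw [hu, smul_smul, mul_inv_cancel₀ hs.ne', one_smul, hw'def]
            abel
          have hviu : ⟪v i, u⟫ = 0 := huo i (by simp [hi])
          have hcs : c ^ 2 + s ^ 2 = 1 := by
            have h2 : ‖w‖ ^ 2 = c ^ 2 + s ^ 2 := by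
              rw [hweq, norm_add_sq_real, norm_smul, norm_smul, real_inner_smul_left,
                real_inner_smul_right, hviu, hv.1 i, hu1, Real.norm_eq_abs, Real.norm_eq_abs,
                mul_pow, mul_pow, sq_abs, sq_abs]
              ring
            rw [hw1] at h2
            linarith [h2]
          have hPw : ‖(P w : E)‖ ^ 2
              = c ^ 2 * ‖(P (v i) : E)‖ ^ 2 + s ^ 2 * ‖(P u : E)‖ ^ 2 := by
            have hPeq : (P w : E) = c • (P (v i) : E) + s • (P u : E) := by
              rw [hweq, map_add, map_smul, map_smul]; rfl
            rw [hPeq, norm_add_sq_real, norm_smul, norm_smul, real_inner_smul_left,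
              real_inner_smul_right, hcross, Real.norm_eq_abs, Real.norm_eq_abs,
              mul_pow, mul_pow, sq_abs, sq_abs]
            ring
          have hA := hstage i
          have hA2 : ‖(P (v (Fin.last n)) : E)‖ ^ 2 ≤ ‖(P (v i) : E)‖ ^ 2 :=
            pow_le_pow_left₀ hL0 hA 2
          have hB2 : ‖(P (v (Fin.last n)) : E)‖ ^ 2 ≤ ‖(P u : E)‖ ^ 2 :=
            pow_le_pow_left₀ hL0 ihu 2
          nlinarith [hPw, hcs, hA2, hB2, hL0, norm_nonneg (P w : E), sq_nonneg c, sq_nonneg s,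
            sq_nonneg (‖(P w : E)‖ + ‖(P (v (Fin.last n)) : E)‖)]
  intro w hw hw1
  exact key (n + 1) 0 (by omega) w hw hw1 (fun j hj => absurd hj (Nat.not_lt_zero _))
end
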